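/- arXiv:1912.04328 — 5 statements merged into one kernel-verified Lean document; each statement's English description precedes it below -/
import Mathlib

section
/- Let C be an essentially small triangulated category. The assignments H ↦ f(H) := {A ∈ C : [A] ∈ H} and S ↦ g(S) := the subgroup of K0(C) generated by {[A] : A ∈ S} are mutually inverse bijections between the set of subgroups of K0(C) and the set of dense complete full subcategories of C. -/
/-!
Grothendieck groups of essentially small triangulated categories.

`K0 C` is the quotient of the free abelian group on the isomorphism classes of objects
of `C` by the subgroup generated by the Euler relations `⟨X⟩ - ⟨Y⟩ + ⟨Z⟩` coming from
distinguished triangles `X ⟶ Y ⟶ Z ⟶ X⟦1⟧`; `K0.mk C A` is the class `[A]`.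
A full subcategory (identified with its set of objects) is *dense* if every object of `C`
is a direct summand of an object of the subcategory, and *complete* if whenever two of
the three objects of a distinguished triangle lie in it, so does the third.
-/

open CategoryTheory CategoryTheory.Limits CategoryTheory.Pretriangulated ZeroObject

universe w v u

namespace TriK0

variable (C : Type u) [Category.{v} C] [HasZeroObject C] [Preadditive C] [HasShift C ℤ]
  [∀ n : ℤ, (shiftFunctor C n).Additive] [Pretriangulated C]

/-- The isomorphism class of an object. -/
def isoCl (A : C) : Quotient (isIsomorphicSetoid C) := Quotient.mk (isIsomorphicSetoid C) A

/-- The subgroup of Euler relations coming from distinguished triangles. -/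
def K0Rels : AddSubgroup (FreeAbelianGroup (Quotient (isIsomorphicSetoid C))) :=
  AddSubgroup.closure
    { x | ∃ T : Triangle C, T ∈ (distTriang C) ∧
        x = FreeAbelianGroup.of (isoCl C T.obj₁) - FreeAbelianGroup.of (isoCl C T.obj₂)
          + FreeAbelianGroup.of (isoCl C T.obj₃) }

/-- The Grothendieck group of the triangulated category `C`. -/
def K0 : Type u := FreeAbelianGroup (Quotient (isIsomorphicSetoid C)) ⧸ K0Rels C

noncomputable instance : AddCommGroup (K0 C) :=
  QuotientAddGroup.Quotient.addCommGroup _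

/-- The class `[A]` of an object `A` in the Grothendieck group. -/
def K0.mk (A : C) : K0 C := QuotientAddGroup.mk (FreeAbelianGroup.of (isoCl C A))

/-- A full subcategory is dense if every object of `C` is a direct summand of an object
of the subcategory. -/
noncomputable def DenseSub (S : Set C) : Prop :=
  ∀ A : C, ∃ X ∈ S, ∃ A' : C, Nonempty (X ≅ A ⊞ A')

/-- A full subcategory is complete if, in any distinguished triangle, whenever two of the
three objects belong to the subcategory, so does the third. -/
def CompleteSub (S : Set C) : Prop :=
  ∀ T ∈ (distTriang C),
    (T.obj₁ ∈ S → T.obj₂ ∈ S → T.obj₃ ∈ S) ∧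
    (T.obj₁ ∈ S → T.obj₃ ∈ S → T.obj₂ ∈ S) ∧
    (T.obj₂ ∈ S → T.obj₃ ∈ S → T.obj₁ ∈ S)

end TriK0

open TriK0

/-!
Following Thomason: isomorphism classes of objects form a commutative monoid `M` under `⊞`,
and the classes of a dense complete `S` form a submonoid `N` which is saturated
(`a + n ∈ N` and `n ∈ N` force `a ∈ N`, by two-out-of-three on split triangles) and cofinal
(`a + b ∈ N` for some `b`, by density). For such `N`, an element of `M` whose image in
`GrothendieckAddGroup M ⧸ ⟨N⟩` vanishes already lies in `N`: from `a = s - t` one gets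
`c + a + t = c + s`, and adding a complement `c'` of `c` makes everything but `a` lie in `N`.

The Euler relations hold in `GrothendieckAddGroup M ⧸ ⟨N⟩`: adding contractible triangles
`X' → X' → 0` and `0 → Z' → Z'` to `X → Y → Z`, with `X ⊞ X'` and `Z ⊞ Z'` in `S`, yields a
distinguished triangle whose outer terms, hence also its middle term, lie in `S`. So `A ↦ [A]`
descends to `K₀(C)`, it kills `⟨[A] : A ∈ S⟩`, and therefore `[A] ∈ ⟨[S]⟩` forces `A ∈ S`.

Conversely `{A | [A] ∈ H}` is dense because `[A ⊞ A⟦1⟧] = 0`, complete by the Euler relation,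
and it generates `H` because every element of `K₀(C)` is a class `[A]`.
-/

open Algebra (GrothendieckAddGroup)
open Algebra.GrothendieckAddGroup (of)

lemma Algebra.GrothendieckAddGroup.of_eq_of_iff {M : Type*} [AddCommMonoid M] {a b : M} :
    of a = of b ↔ ∃ c, c + a = c + b :=
  (AddLocalization.addMonoidOf ⊤).eq_iff_exists.trans
    ⟨fun ⟨c, h⟩ => ⟨c, h⟩, fun ⟨c, h⟩ => ⟨⟨c, trivial⟩, h⟩⟩

namespace AddSubmonoid

variable {M : Type*} [AddCommMonoid M] (N : AddSubmonoid M)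

lemma exists_eq_sub_of_mem_closure_image_of {x : GrothendieckAddGroup M}
    (hx : x ∈ AddSubgroup.closure (of '' (N : Set M))) :
    ∃ s ∈ N, ∃ t ∈ N, x = of s - of t := by
  induction hx using AddSubgroup.closure_induction with
  | mem x hx =>
    obtain ⟨s, hs, rfl⟩ := hx
    exact ⟨s, hs, 0, N.zero_mem, by simp⟩
  | zero => exact ⟨0, N.zero_mem, 0, N.zero_mem, by simp⟩
  | add x y _ _ hx hy =>
    obtain ⟨s, hs, t, ht, rfl⟩ := hx
    obtain ⟨s', hs', t', ht', rfl⟩ := hy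
    exact ⟨s + s', N.add_mem hs hs', t + t', N.add_mem ht ht', by simp only [map_add]; abel⟩
  | neg x _ hx =>
    obtain ⟨s, hs, t, ht, rfl⟩ := hx
    exact ⟨t, ht, s, hs, by abel⟩

lemma mem_of_of_mem_closure (hsat : ∀ a n, n ∈ N → a + n ∈ N → a ∈ N)
    (hcof : ∀ a, ∃ b, a + b ∈ N) {a : M} (ha : of a ∈ AddSubgroup.closure (of '' (N : Set M))) :
    a ∈ N := by
  obtain ⟨s, hs, t, ht, hst⟩ := N.exists_eq_sub_of_mem_closure_image_of ha
  obtain ⟨c, hc⟩ := GrothendieckAddGroup.of_eq_of_iff.1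
    (show of (a + t) = of s by rw [map_add, hst, sub_add_cancel])
  obtain ⟨c', hc'⟩ := hcof c
  have key : a + (t + (c + c')) = s + (c + c') :=
    calc a + (t + (c + c')) = c + (a + t) + c' := by abel
      _ = s + (c + c') := by rw [hc]; abel
  exact hsat a _ (N.add_mem ht hc') (key ▸ N.add_mem hs hc')

end AddSubmonoid

namespace TriK0

section Biproducts

variable {D : Type u} [Category.{v} D]

noncomputable instance [HasZeroObject D] : Zero (Quotient (isIsomorphicSetoid D)) := ⟨⟦0⟧⟩

lemma isoCl_eq_of_iso {A B : D} (e : A ≅ B) : isoCl D A = isoCl D B := Quotient.sound ⟨e⟩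

lemma isoCl_zero [HasZeroObject D] : isoCl D (0 : D) = 0 := rfl

variable [HasZeroMorphisms D] [HasBinaryBiproducts D]

noncomputable instance : Add (Quotient (isIsomorphicSetoid D)) :=
  ⟨Quotient.map₂ (· ⊞ ·) fun _ _ ⟨e₁⟩ _ _ ⟨e₂⟩ => ⟨biprod.mapIso e₁ e₂⟩⟩

noncomputable instance [HasZeroObject D] : AddCommMonoid (Quotient (isIsomorphicSetoid D)) where
  add_assoc := by rintro ⟨A⟩ ⟨B⟩ ⟨E⟩; exact Quotient.sound ⟨biprod.associator A B E⟩
  zero_add := by rintro ⟨A⟩; exact Quotient.sound ⟨(isoZeroBiprod (isZero_zero D)).symm⟩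
  add_zero := by rintro ⟨A⟩; exact Quotient.sound ⟨(isoBiprodZero (isZero_zero D)).symm⟩
  add_comm := by rintro ⟨A⟩ ⟨B⟩; exact Quotient.sound ⟨biprod.braiding A B⟩
  nsmul := nsmulRec

noncomputable def piBoolIsoBiprod (X : Bool → D) [HasProduct X] : ∏ᶜ X ≅ X true ⊞ X false where
  hom := biprod.lift (Pi.π X true) (Pi.π X false)
  inv := Pi.lift fun b => Bool.rec biprod.snd biprod.fst b
  hom_inv_id := by
    apply Pi.hom_ext
    rintro (_ | _) <;> simp
  inv_hom_id := by
    apply biprod.hom_ext <;> simp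

end Biproducts

variable {C : Type u} [Category.{v} C] [HasZeroObject C] [Preadditive C] [HasShift C ℤ]
  [∀ n : ℤ, (shiftFunctor C n).Additive] [Pretriangulated C]

lemma exists_distTriang_isoCl_add {T₁ T₂ : Triangle C} (h₁ : T₁ ∈ distTriang C)
    (h₂ : T₂ ∈ distTriang C) :
    ∃ T ∈ distTriang C, isoCl C T.obj₁ = isoCl C T₁.obj₁ + isoCl C T₂.obj₁ ∧
      isoCl C T.obj₂ = isoCl C T₁.obj₂ + isoCl C T₂.obj₂ ∧
      isoCl C T.obj₃ = isoCl C T₁.obj₃ + isoCl C T₂.obj₃ := by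
  let F : Bool → Triangle C := fun b => bif b then T₁ else T₂
  have hF : ∀ b, F b ∈ distTriang C := by rintro (_ | _) <;> assumption
  exact ⟨productTriangle F, productTriangle_distinguished F hF,
    isoCl_eq_of_iso (piBoolIsoBiprod _), isoCl_eq_of_iso (piBoolIsoBiprod _),
    isoCl_eq_of_iso (piBoolIsoBiprod _)⟩

namespace K0

lemma mk_sub_mk_add_mk {T : Triangle C} (hT : T ∈ distTriang C) :
    K0.mk C T.obj₁ - K0.mk C T.obj₂ + K0.mk C T.obj₃ = 0 :=
  (QuotientAddGroup.eq_zero_iff _).2 (AddSubgroup.subset_closure ⟨T, hT, rfl⟩)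

lemma mk_zero : K0.mk C (0 : C) = 0 := by
  simpa using mk_sub_mk_add_mk (contractible_distinguished (0 : C))

lemma mk_biprod (A B : C) : K0.mk C (A ⊞ B) = K0.mk C A + K0.mk C B := by
  have h := mk_sub_mk_add_mk (binaryBiproductTriangle_distinguished A B)
  rw [sub_add_eq_add_sub, sub_eq_zero] at h
  exact h.symm

lemma mk_shift_one (A : C) : K0.mk C (A⟦(1 : ℤ)⟧) = -K0.mk C A := by
  have h := mk_sub_mk_add_mk (contractible_distinguished₂ A)
  simp only [Triangle.mk_obj₁, Triangle.mk_obj₂, Triangle.mk_obj₃, mk_zero, sub_zero] at h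
  exact (neg_eq_of_add_eq_zero_right h).symm

lemma mk_surjective : Function.Surjective (K0.mk C) := by
  rintro ⟨x⟩
  induction x using FreeAbelianGroup.induction_on with
  | zero => exact ⟨0, mk_zero⟩
  | of a => exact a.inductionOn fun A => ⟨A, rfl⟩
  | neg x hx =>
    obtain ⟨A, hA⟩ := hx
    exact ⟨A⟦(1 : ℤ)⟧, by rw [mk_shift_one, hA]; rfl⟩
  | add x y hx hy =>
    obtain ⟨A, hA⟩ := hx
    obtain ⟨B, hB⟩ := hy
    exact ⟨A ⊞ B, by rw [mk_biprod, hA, hB]; rfl⟩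

noncomputable def lift {G : Type*} [AddCommGroup G] (f : Quotient (isIsomorphicSetoid C) → G)
    (hf : ∀ T ∈ distTriang C,
      f (isoCl C T.obj₁) - f (isoCl C T.obj₂) + f (isoCl C T.obj₃) = 0) :
    K0 C →+ G :=
  QuotientAddGroup.lift (K0Rels C) (FreeAbelianGroup.lift f) <| by
    rw [K0Rels, AddSubgroup.closure_le]
    rintro _ ⟨T, hT, rfl⟩
    simpa using hf T hT

@[simp]
lemma lift_mk {G : Type*} [AddCommGroup G] (f : Quotient (isIsomorphicSetoid C) → G) (hf) (A : C) :
    lift f hf (K0.mk C A) = f (isoCl C A) :=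
  FreeAbelianGroup.lift_apply_of f (isoCl C A)

end K0

variable (H : AddSubgroup (K0 C))

lemma denseSub_setOf_mk_mem : DenseSub C {A | K0.mk C A ∈ H} := fun A =>
  ⟨A ⊞ A⟦(1 : ℤ)⟧, by simp [K0.mk_biprod, K0.mk_shift_one], A⟦(1 : ℤ)⟧, ⟨Iso.refl _⟩⟩

lemma completeSub_setOf_mk_mem : CompleteSub C {A | K0.mk C A ∈ H} := by
  intro T hT
  have h := K0.mk_sub_mk_add_mk hT
  rw [sub_add_eq_add_sub, sub_eq_zero] at h
  refine ⟨fun h₁ h₂ => ?_, fun h₁ h₃ => ?_, fun h₂ h₃ => ?_⟩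
  · simpa [← h] using H.sub_mem h₂ h₁
  · simpa [← h] using H.add_mem h₁ h₃
  · simpa [← h] using H.sub_mem h₂ h₃

lemma closure_image_mk_setOf_mk_mem :
    AddSubgroup.closure (K0.mk C '' {A | K0.mk C A ∈ H}) = H := by
  refine le_antisymm (AddSubgroup.closure_le _ |>.2 ?_) fun x hx => ?_
  · rintro _ ⟨A, hA, rfl⟩
    exact hA
  · obtain ⟨A, rfl⟩ := K0.mk_surjective x
    exact AddSubgroup.subset_closure ⟨A, hx, rfl⟩

variable {S : Set C}

namespace CompleteSub

lemma zero_mem (hc : CompleteSub C S) {X : C} (hX : X ∈ S) : (0 : C) ∈ S :=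
  (hc _ (contractible_distinguished X)).1 hX hX

lemma mem_of_iso (hc : CompleteSub C S) (h0 : (0 : C) ∈ S) {A B : C} (e : A ≅ B)
    (hA : A ∈ S) : B ∈ S :=
  have hT := (Triangle.distinguished_iff_of_isZero₃ (Triangle.mk e.hom (0 : B ⟶ 0) 0)
    (isZero_zero C)).2 (inferInstanceAs (IsIso e.hom))
  (hc _ hT).2.1 hA h0

lemma biprod_mem (hc : CompleteSub C S) {A B : C} (hA : A ∈ S) (hB : B ∈ S) : (A ⊞ B) ∈ S :=
  (hc _ (binaryBiproductTriangle_distinguished A B)).2.1 hA hB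

lemma mem_of_biprod_mem (hc : CompleteSub C S) {A B : C} (hAB : (A ⊞ B) ∈ S) (hB : B ∈ S) :
    A ∈ S :=
  (hc _ (binaryBiproductTriangle_distinguished A B)).2.2 hAB hB

def isoClasses (hc : CompleteSub C S) (h0 : (0 : C) ∈ S) :
    AddSubmonoid (Quotient (isIsomorphicSetoid C)) where
  carrier := isoCl C '' S
  add_mem' := by
    rintro _ _ ⟨A, hA, rfl⟩ ⟨B, hB, rfl⟩
    exact ⟨A ⊞ B, hc.biprod_mem hA hB, rfl⟩
  zero_mem' := ⟨0, h0, rfl⟩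

variable (hc : CompleteSub C S) (h0 : (0 : C) ∈ S)

lemma isoCl_mem_isoClasses_iff {A : C} : isoCl C A ∈ hc.isoClasses h0 ↔ A ∈ S :=
  ⟨fun ⟨_, hB, h⟩ => hc.mem_of_iso h0 (Quotient.exact h).some hB, fun hA => ⟨A, hA, rfl⟩⟩

lemma mem_isoClasses_of_add_mem (a n : Quotient (isIsomorphicSetoid C))
    (hn : n ∈ hc.isoClasses h0) (han : a + n ∈ hc.isoClasses h0) : a ∈ hc.isoClasses h0 := by
  induction a using Quotient.inductionOn with | h A =>
  induction n using Quotient.inductionOn with | h U =>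
  exact (hc.isoCl_mem_isoClasses_iff h0).2 (hc.mem_of_biprod_mem
    ((hc.isoCl_mem_isoClasses_iff h0).1 han) ((hc.isoCl_mem_isoClasses_iff h0).1 hn))

lemma exists_add_mem_isoClasses (hd : DenseSub C S) (a : Quotient (isIsomorphicSetoid C)) :
    ∃ b, a + b ∈ hc.isoClasses h0 := by
  induction a using Quotient.inductionOn with | h A =>
  obtain ⟨X, hX, A', ⟨e⟩⟩ := hd A
  exact ⟨isoCl C A', X, hX, isoCl_eq_of_iso e⟩

noncomputable abbrev isoClassesSpan :
    AddSubgroup (GrothendieckAddGroup (Quotient (isIsomorphicSetoid C))) :=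
  AddSubgroup.closure (of '' (hc.isoClasses h0 : Set _))

lemma of_sub_of_add_of_mem_isoClassesSpan (hd : DenseSub C S) {T : Triangle C}
    (hT : T ∈ distTriang C) :
    of (isoCl C T.obj₁) - of (isoCl C T.obj₂) + of (isoCl C T.obj₃) ∈ hc.isoClassesSpan h0 := by
  obtain ⟨X, hX, X', ⟨eX⟩⟩ := hd T.obj₁
  obtain ⟨Z, hZ, Z', ⟨eZ⟩⟩ := hd T.obj₃
  obtain ⟨V, hV, hV₁, hV₂, hV₃⟩ := exists_distTriang_isoCl_add hT (contractible_distinguished X')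
  obtain ⟨W, hW, hW₁, hW₂, hW₃⟩ := exists_distTriang_isoCl_add hV (contractible_distinguished₁ Z')
  simp only [contractibleTriangle_obj₁, contractibleTriangle_obj₂, contractibleTriangle_obj₃,
    Triangle.mk_obj₁, Triangle.mk_obj₂, Triangle.mk_obj₃, isoCl_zero, add_zero]
    at hV₁ hV₂ hV₃ hW₁ hW₂ hW₃
  rw [hV₁] at hW₁
  rw [hV₂] at hW₂
  rw [hV₃] at hW₃
  have mem_iff {A : C} : isoCl C A ∈ hc.isoClasses h0 ↔ A ∈ S := hc.isoCl_mem_isoClasses_iff h0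
  have hW₁S : W.obj₁ ∈ S := mem_iff.1 ⟨X, hX, (isoCl_eq_of_iso eX).trans hW₁.symm⟩
  have hW₃S : W.obj₃ ∈ S := mem_iff.1 ⟨Z, hZ, (isoCl_eq_of_iso eZ).trans hW₃.symm⟩
  have hW₂S : W.obj₂ ∈ S := (hc W hW).2.1 hW₁S hW₃S
  have mem {A : C} (hA : A ∈ S) : of (isoCl C A) ∈ hc.isoClassesSpan h0 :=
    AddSubgroup.subset_closure ⟨_, mem_iff.2 hA, rfl⟩
  have key : of (isoCl C T.obj₁) - of (isoCl C T.obj₂) + of (isoCl C T.obj₃) =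
      of (isoCl C W.obj₁) - of (isoCl C W.obj₂) + of (isoCl C W.obj₃) := by
    rw [hW₁, hW₂, hW₃]
    simp only [map_add]
    abel
  rw [key]
  exact add_mem (sub_mem (mem hW₁S) (mem hW₂S)) (mem hW₃S)

end CompleteSub

lemma CompleteSub.mem_of_mk_mem_closure (hc : CompleteSub C S) (hd : DenseSub C S) {A : C}
    (hA : K0.mk C A ∈ AddSubgroup.closure (K0.mk C '' S)) : A ∈ S := by
  obtain ⟨X, hX, -⟩ := hd 0
  have h0 := hc.zero_mem hX
  let φ : K0 C →+ GrothendieckAddGroup _ ⧸ hc.isoClassesSpan h0 :=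
    K0.lift (fun a => (of a : GrothendieckAddGroup _ ⧸ hc.isoClassesSpan h0)) fun T hT => by
      rw [← QuotientAddGroup.mk_sub, ← QuotientAddGroup.mk_add, QuotientAddGroup.eq_zero_iff]
      exact hc.of_sub_of_add_of_mem_isoClassesSpan h0 hd hT
  have hφ (B : C) : φ (K0.mk C B) = 0 ↔ of (isoCl C B) ∈ hc.isoClassesSpan h0 := by
    rw [K0.lift_mk, QuotientAddGroup.eq_zero_iff]
  have hker : AddSubgroup.closure (K0.mk C '' S) ≤ φ.ker := by
    rw [AddSubgroup.closure_le]
    rintro _ ⟨B, hB, rfl⟩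
    exact (hφ B).2 (AddSubgroup.subset_closure ⟨_, (hc.isoCl_mem_isoClasses_iff h0).2 hB, rfl⟩)
  exact (hc.isoCl_mem_isoClasses_iff h0).1 ((hc.isoClasses h0).mem_of_of_mem_closure
    (hc.mem_isoClasses_of_add_mem h0) (hc.exists_add_mem_isoClasses h0 hd) ((hφ A).1 (hker hA)))

end TriK0

/-- Thomason's classification: `H ↦ f(H) = {A | [A] ∈ H}` and
`S ↦ g(S) = ⟨[A] : A ∈ S⟩` are mutually inverse bijections between subgroups of
`K₀(C)` and dense complete full subcategories of `C`. -/
theorem classification_of_dense_complete_subcategories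
    (C : Type u) [Category.{v} C] [HasZeroObject C] [Preadditive C] [HasShift C ℤ]
    [∀ n : ℤ, (shiftFunctor C n).Additive] [Pretriangulated C] [EssentiallySmall.{w} C] :
    (∀ H : AddSubgroup (K0 C),
      DenseSub C {A : C | K0.mk C A ∈ H} ∧ CompleteSub C {A : C | K0.mk C A ∈ H} ∧
      AddSubgroup.closure (K0.mk C '' {A : C | K0.mk C A ∈ H}) = H) ∧
    (∀ S : Set C, DenseSub C S → CompleteSub C S →
      {A : C | K0.mk C A ∈ AddSubgroup.closure (K0.mk C '' S)} = S) := by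
  refine ⟨fun H => ⟨denseSub_setOf_mk_mem H, completeSub_setOf_mk_mem H,
    closure_image_mk_setOf_mk_mem H⟩, fun S hd hc => ?_⟩
  ext A
  exact ⟨hc.mem_of_mk_mem_closure hd, fun hA => AddSubgroup.subset_closure ⟨A, hA, rfl⟩⟩
end

section
/- Let C be an essentially small triangulated category and H a subgroup of K0(C). Then the full subcategory f(H) = {A ∈ C : [A] ∈ H} is a dense complete full subcategory of C. -/
/-!
Grothendieck groups of essentially small triangulated categories.

`K0 C` is the quotient of the free abelian group on the isomorphism classes of objects
of `C` by the subgroup generated by the Euler relations `⟨X⟩ - ⟨Y⟩ + ⟨Z⟩` coming from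
distinguished triangles `X ⟶ Y ⟶ Z ⟶ X⟦1⟧`; `K0.mk C A` is the class `[A]`.
A full subcategory (identified with its set of objects) is *dense* if every object of `C`
is a direct summand of an object of the subcategory, and *complete* if whenever two of
the three objects of a distinguished triangle lie in it, so does the third.
-/

open CategoryTheory CategoryTheory.Limits CategoryTheory.Pretriangulated ZeroObject

universe w v u

namespace TriK0
section Aux
variable (C : Type u) [Category.{v} C] [HasZeroObject C] [Preadditive C] [HasShift C ℤ]
  [∀ n : ℤ, (shiftFunctor C n).Additive] [Pretriangulated C]

lemma euler (T : Triangle C) (hT : T ∈ distTriang C) :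
    K0.mk C T.obj₁ - K0.mk C T.obj₂ + K0.mk C T.obj₃ = 0 := by
  have h : (FreeAbelianGroup.of (isoCl C T.obj₁) - FreeAbelianGroup.of (isoCl C T.obj₂)
      + FreeAbelianGroup.of (isoCl C T.obj₃)) ∈ K0Rels C :=
    AddSubgroup.subset_closure ⟨T, hT, rfl⟩
  have e : K0.mk C T.obj₁ - K0.mk C T.obj₂ + K0.mk C T.obj₃ =
      (QuotientAddGroup.mk (FreeAbelianGroup.of (isoCl C T.obj₁)
        - FreeAbelianGroup.of (isoCl C T.obj₂)
        + FreeAbelianGroup.of (isoCl C T.obj₃)) : FreeAbelianGroup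
          (_root_.Quotient (isIsomorphicSetoid C)) ⧸ K0Rels C) := rfl
  exact e.trans ((QuotientAddGroup.eq_zero_iff _).2 h)

lemma mk_zero : K0.mk C (0 : C) = 0 := by
  have := euler C _ (contractible_distinguished (0 : C))
  simpa [contractibleTriangle] using this

lemma mk_shift (A : C) : K0.mk C (A⟦(1 : ℤ)⟧) = - K0.mk C A := by
  have := euler C _ (rot_of_distTriang _ (contractible_distinguished A))
  simp only [Triangle.rotate, contractibleTriangle, Triangle.mk] at this
  rw [mk_zero] at this
  linear_combination (norm := abel) this

lemma mk_biprod (X Y : C) : K0.mk C (X ⊞ Y) = K0.mk C X + K0.mk C Y := by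
  have := euler C _ (binaryBiproductTriangle_distinguished X Y)
  simp only [binaryBiproductTriangle, Triangle.mk] at this
  linear_combination (norm := abel) -this

end Aux
end TriK0

open TriK0

/-- For any subgroup `H ≤ K₀(C)`, the full subcategory `f(H) = {A | [A] ∈ H}` is dense
and complete. -/
theorem preimage_subgroup_dense_complete
    (C : Type u) [Category.{v} C] [HasZeroObject C] [Preadditive C] [HasShift C ℤ]
    [∀ n : ℤ, (shiftFunctor C n).Additive] [Pretriangulated C] [EssentiallySmall.{w} C]
    (H : AddSubgroup (K0 C)) :
    DenseSub C {A : C | K0.mk C A ∈ H} ∧ CompleteSub C {A : C | K0.mk C A ∈ H} := by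
  constructor
  · intro A
    refine ⟨A ⊞ A⟦(1 : ℤ)⟧, ?_, A⟦(1 : ℤ)⟧, ⟨Iso.refl _⟩⟩
    show K0.mk C _ ∈ H
    rw [mk_biprod, mk_shift]
    simpa using H.zero_mem
  · intro T hT
    have h := euler C T hT
    refine ⟨fun h1 h2 => ?_, fun h1 h3 => ?_, fun h2 h3 => ?_⟩
    · have e : K0.mk C T.obj₃ = K0.mk C T.obj₂ - K0.mk C T.obj₁ := by
        linear_combination (norm := abel) h
      rw [Set.mem_setOf_eq, e]; exact H.sub_mem h2 h1
    · have e : K0.mk C T.obj₂ = K0.mk C T.obj₁ + K0.mk C T.obj₃ := by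
        linear_combination (norm := abel) -h
      rw [Set.mem_setOf_eq, e]; exact H.add_mem h1 h3
    · have e : K0.mk C T.obj₁ = K0.mk C T.obj₂ - K0.mk C T.obj₃ := by
        linear_combination (norm := abel) h
      rw [Set.mem_setOf_eq, e]; exact H.sub_mem h2 h3
end

section
/- Let C be an essentially small triangulated category and S a dense complete full subcategory of C. An object A of C belongs to S if and only if there exist objects S_A and S_0 in S such that A ⊕ S_A ≅ S_0. -/
/-!
Grothendieck groups of essentially small triangulated categories.

`K0 C` is the quotient of the free abelian group on the isomorphism classes of objects
of `C` by the subgroup generated by the Euler relations `⟨X⟩ - ⟨Y⟩ + ⟨Z⟩` coming from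
distinguished triangles `X ⟶ Y ⟶ Z ⟶ X⟦1⟧`; `K0.mk C A` is the class `[A]`.
A full subcategory (identified with its set of objects) is *dense* if every object of `C`
is a direct summand of an object of the subcategory, and *complete* if whenever two of
the three objects of a distinguished triangle lie in it, so does the third.
-/

open CategoryTheory CategoryTheory.Limits CategoryTheory.Pretriangulated ZeroObject

universe w v u

/-!
Both directions come from the distinguished triangle `A ⟶ A ⊞ B ⟶ B ⟶ A⟦1⟧` and the
two-out-of-three property: for `A ∈ S` take `S_A = A` and `S_0 = A ⊞ A`; conversely, transporting
that triangle along `A ⊞ S_A ≅ S_0` gives a distinguished triangle `A ⟶ S_0 ⟶ S_A ⟶ A⟦1⟧`.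
-/

namespace TriK0

namespace CompleteSub

variable {C : Type*} [Category C] [HasZeroObject C] [Preadditive C] [HasShift C ℤ]
  [∀ n : ℤ, (shiftFunctor C n).Additive] [Pretriangulated C] {S : Set C}

theorem biprod_mem_s6 (hS : CompleteSub C S) {X Y : C} (hX : X ∈ S) (hY : Y ∈ S) : (X ⊞ Y) ∈ S :=
  (hS _ (binaryBiproductTriangle_distinguished X Y)).2.1 hX hY

theorem mem_of_biprod_iso (hS : CompleteSub C S) {X Y Z : C} (e : X ⊞ Y ≅ Z) (hY : Y ∈ S)
    (hZ : Z ∈ S) : X ∈ S := by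
  -- Anonymous constructors rather than `Triangle.mk`, so that `simp` sees the objects reducibly.
  have hB : (⟨X, X ⊞ Y, Y, biprod.inl, biprod.snd, 0⟩ : Triangle C) ∈ distTriang C :=
    binaryBiproductTriangle_distinguished X Y
  have hT : (⟨X, Z, Y, biprod.inl ≫ e.hom, e.inv ≫ biprod.snd, 0⟩ : Triangle C) ∈ distTriang C :=
    isomorphic_distinguished _ hB _
      (Triangle.isoMk _ _ (Iso.refl X) e.symm (Iso.refl Y) (by simp) (by simp) (by simp))
  exact (hS _ hT).2.2 hZ hY

end CompleteSub

end TriK0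

open TriK0

/-- For a dense complete full subcategory `S`, an object `A` lies in `S` if and only if
`A ⊕ S_A ≅ S_0` for some objects `S_A, S_0 ∈ S`. -/
theorem mem_iff_biprod_iso
    (C : Type u) [Category.{v} C] [HasZeroObject C] [Preadditive C] [HasShift C ℤ]
    [∀ n : ℤ, (shiftFunctor C n).Additive] [Pretriangulated C] [EssentiallySmall.{w} C]
    (S : Set C) (hdense : DenseSub C S) (hcomplete : CompleteSub C S) (A : C) :
    A ∈ S ↔ ∃ SA ∈ S, ∃ S0 ∈ S, Nonempty ((A ⊞ SA) ≅ S0) := by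
  constructor
  · intro hA
    exact ⟨A, hA, A ⊞ A, hcomplete.biprod_mem_s6 hA hA, ⟨Iso.refl _⟩⟩
  · rintro ⟨SA, hSA, S0, hS0, ⟨e⟩⟩
    exact hcomplete.mem_of_biprod_iso e hSA hS0
end

section
/- Let C be an essentially small abelian category and 𝒢 a cogenerator of C. The assignments H ↦ f(H) := {A ∈ C : [A] ∈ H} and S ↦ g(S) := the subgroup of K0(C) generated by {[A] : A ∈ S} are mutually inverse bijections between the set of subgroups of K0(C) containing H_𝒢 and the set of dense complete full subcategories of C containing 𝒢. -/
/-!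
Grothendieck groups of essentially small abelian categories.

`K0 C` is the quotient of the free abelian group on the isomorphism classes of objects
of `C` by the subgroup generated by the Euler relations `⟨A⟩ - ⟨B⟩ + ⟨C⟩` coming from
short exact sequences `0 ⟶ A ⟶ B ⟶ C ⟶ 0`; `K0.mk C A` is the class `[A]`.
A full subcategory (identified with its set of objects) is *dense* if every object of `C`
is a direct summand of an object of the subcategory, and *complete* if whenever two of
the three objects of a short exact sequence lie in it, so does the third.
A *generator* (resp. *cogenerator*) is a full additive subcategory `𝒢` such that every
object `A` fits in a short exact sequence `0 ⟶ A' ⟶ G ⟶ A ⟶ 0`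
(resp. `0 ⟶ A ⟶ G ⟶ A' ⟶ 0`) with `G ∈ 𝒢`.
-/

open CategoryTheory CategoryTheory.Limits ZeroObject

universe w v u

namespace AbK0

variable (C : Type u) [Category.{v} C] [Abelian C]

/-- `IsSES f g` says that `0 ⟶ A ⟶ B ⟶ D ⟶ 0` given by `f : A ⟶ B` and `g : B ⟶ D`
is a short exact sequence. -/
def IsSES {A B D : C} (f : A ⟶ B) (g : B ⟶ D) : Prop :=
  ∃ w : f ≫ g = 0, (ShortComplex.mk f g w).ShortExact

/-- The isomorphism class of an object. -/
def isoCl (A : C) : Quotient (isIsomorphicSetoid C) := Quotient.mk (isIsomorphicSetoid C) A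

/-- The subgroup of Euler relations coming from short exact sequences. -/
def K0Rels : AddSubgroup (FreeAbelianGroup (Quotient (isIsomorphicSetoid C))) :=
  AddSubgroup.closure
    { x | ∃ S : ShortComplex C, S.ShortExact ∧
        x = FreeAbelianGroup.of (isoCl C S.X₁) - FreeAbelianGroup.of (isoCl C S.X₂)
          + FreeAbelianGroup.of (isoCl C S.X₃) }

/-- The Grothendieck group of the abelian category `C`. -/
def K0 : Type u := FreeAbelianGroup (Quotient (isIsomorphicSetoid C)) ⧸ K0Rels C

noncomputable instance : AddCommGroup (K0 C) :=
  QuotientAddGroup.Quotient.addCommGroup _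

/-- The class `[A]` of an object `A` in the Grothendieck group. -/
def K0.mk (A : C) : K0 C := QuotientAddGroup.mk (FreeAbelianGroup.of (isoCl C A))

/-- A full subcategory is dense if every object of `C` is a direct summand of an object
of the subcategory. -/
noncomputable def DenseSub (S : Set C) : Prop :=
  ∀ A : C, ∃ X ∈ S, ∃ A' : C, Nonempty (X ≅ A ⊞ A')

/-- A full subcategory is complete if, in any short exact sequence, whenever two of the
three objects belong to the subcategory, so does the third. -/
def CompleteSub (S : Set C) : Prop :=
  ∀ ⦃A B D : C⦄ (f : A ⟶ B) (g : B ⟶ D), IsSES C f g →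
    ((A ∈ S → B ∈ S → D ∈ S) ∧ (A ∈ S → D ∈ S → B ∈ S) ∧ (B ∈ S → D ∈ S → A ∈ S))

/-- A full additive subcategory: it contains a zero object and is closed under
binary direct sums. -/
noncomputable def AdditiveSub (G : Set C) : Prop :=
  (0 : C) ∈ G ∧ ∀ A B : C, A ∈ G → B ∈ G → (A ⊞ B) ∈ G

/-- `𝒢` is a generator of `C`: a full additive subcategory such that every object `A`
admits a short exact sequence `0 ⟶ A' ⟶ G ⟶ A ⟶ 0` with `G ∈ 𝒢`. -/
noncomputable def IsGenerator (G : Set C) : Prop :=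
  AdditiveSub C G ∧
    ∀ A : C, ∃ (A' Gb : C) (f : A' ⟶ Gb) (g : Gb ⟶ A), Gb ∈ G ∧ IsSES C f g

/-- `𝒢` is a cogenerator of `C`: a full additive subcategory such that every object `A`
admits a short exact sequence `0 ⟶ A ⟶ G ⟶ A' ⟶ 0` with `G ∈ 𝒢`. -/
noncomputable def IsCogenerator (G : Set C) : Prop :=
  AdditiveSub C G ∧
    ∀ A : C, ∃ (Gb A' : C) (f : A ⟶ Gb) (g : Gb ⟶ A'), Gb ∈ G ∧ IsSES C f g

end AbK0

open AbK0

/-!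
Every short exact sequence gives `[B] = [A] + [D]`, so `{A | [A] ∈ H}` is complete, and a
cogenerator sequence `0 ⟶ A ⟶ G ⟶ A' ⟶ 0` makes it dense since `[A ⊞ A'] = [G] ∈ H`.
The substance is the converse: a dense complete `S` is recovered from the subgroup it
generates. This rests on a description of equality in `K₀`: `[P] = [X]` iff
`P ⊞ V₂ ≅ X ⊞ V₁` for the middle terms of two short exact sequences `0 ⟶ U ⟶ Vᵢ ⟶ W ⟶ 0`.
That relation is a cancellative congruence for `⊞`, so objects modulo it form a cancellative
monoid, and `K₀` maps to its Grothendieck group. Density lets one enlarge `U` and `W` into `S`,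
after which completeness carries membership in `S` across the relation.
-/

namespace AbK0

variable {C : Type u} [Category.{v} C] [Abelian C]

theorem isSES_inl_snd (A B : C) :
    IsSES C (biprod.inl : A ⟶ A ⊞ B) (biprod.snd : A ⊞ B ⟶ B) :=
  ⟨_, (ShortComplex.Splitting.ofHasBinaryBiproduct A B).shortExact⟩

theorem isSES_iso_zero {A B : C} (e : A ≅ B) : IsSES C e.hom (0 : B ⟶ 0) :=
  ⟨comp_zero, (ShortComplex.Splitting.ofIsIsoOfIsZero (S := .mk _ _ comp_zero)
    (inferInstanceAs (IsIso e.hom)) (isZero_zero C)).shortExact⟩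

theorem isSES_zero_iso {A B : C} (e : A ≅ B) : IsSES C (0 : (0 : C) ⟶ A) e.hom :=
  ⟨zero_comp, (ShortComplex.Splitting.ofIsZeroOfIsIso (S := .mk _ _ zero_comp)
    (isZero_zero C) (inferInstanceAs (IsIso e.hom))).shortExact⟩

theorem IsSES.of_iso {A B D A' B' D' : C} {f : A ⟶ B} {g : B ⟶ D} (h : IsSES C f g)
    (eA : A ≅ A') (eB : B ≅ B') (eD : D ≅ D') :
    IsSES C (eA.inv ≫ f ≫ eB.hom) (eB.inv ≫ g ≫ eD.hom) := by
  obtain ⟨w, hw⟩ := h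
  have w' : (eA.inv ≫ f ≫ eB.hom) ≫ (eB.inv ≫ g ≫ eD.hom) = 0 := by
    simp [reassoc_of% w]
  exact ⟨w', ShortComplex.shortExact_of_iso
    (ShortComplex.isoMk (S₁ := ShortComplex.mk f g w) (S₂ := ShortComplex.mk _ _ w')
      eA eB eD (by simp) (by simp)) hw⟩

theorem IsSES.biprod_map {A B D A' B' D' : C} {f : A ⟶ B} {g : B ⟶ D}
    {f' : A' ⟶ B'} {g' : B' ⟶ D'} (h : IsSES C f g) (h' : IsSES C f' g') :
    IsSES C (biprod.map f f') (biprod.map g g') := by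
  obtain ⟨w, hw⟩ := h
  obtain ⟨w', hw'⟩ := h'
  have := hw.mono_f
  have := hw.epi_g
  have := hw'.mono_f
  have := hw'.epi_g
  have wm : biprod.map f f' ≫ biprod.map g g' = 0 := by
    ext <;> simp [reassoc_of% w, reassoc_of% w']
  refine ⟨wm, ShortComplex.ShortExact.mk' ?_ inferInstance inferInstance⟩
  apply ShortComplex.exact_of_f_is_kernel
  refine KernelFork.IsLimit.ofι' _ _ (fun {Z} k hk => ?_)
  have hk₁ : (k ≫ biprod.fst) ≫ g = 0 := by
    rw [Category.assoc, ← biprod.map_fst, ← Category.assoc, hk, zero_comp]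
  have hk₂ : (k ≫ biprod.snd) ≫ g' = 0 := by
    rw [Category.assoc, ← biprod.map_snd, ← Category.assoc, hk, zero_comp]
  refine ⟨biprod.lift (hw.exact.lift _ hk₁) (hw'.exact.lift _ hk₂), ?_⟩
  ext
  · simpa using hw.exact.lift_f _ hk₁
  · simpa using hw'.exact.lift_f _ hk₂

theorem K0.mk_eq_add_of_isSES {A B D : C} {f : A ⟶ B} {g : B ⟶ D} (h : IsSES C f g) :
    K0.mk C B = K0.mk C A + K0.mk C D := by
  obtain ⟨w, hw⟩ := h
  have hrel : FreeAbelianGroup.of (isoCl C A) - FreeAbelianGroup.of (isoCl C B)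
      + FreeAbelianGroup.of (isoCl C D) ∈ K0Rels C :=
    AddSubgroup.subset_closure ⟨ShortComplex.mk f g w, hw, rfl⟩
  have h0 : K0.mk C A - K0.mk C B + K0.mk C D = 0 :=
    (QuotientAddGroup.eq_zero_iff _).2 hrel
  rw [← sub_eq_zero, ← neg_eq_zero, ← h0]
  abel

theorem K0.mk_zero : K0.mk C (0 : C) = 0 :=
  left_eq_add.mp (K0.mk_eq_add_of_isSES (isSES_iso_zero (Iso.refl (0 : C))))

theorem K0.mk_biprod (A B : C) : K0.mk C (A ⊞ B) = K0.mk C A + K0.mk C B :=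
  K0.mk_eq_add_of_isSES (isSES_inl_snd A B)

noncomputable def K0.lift {Γ : Type*} [AddCommGroup Γ] (φ : C → Γ)
    (hφ : ∀ ⦃A B D : C⦄ (f : A ⟶ B) (g : B ⟶ D), IsSES C f g → φ B = φ A + φ D) :
    K0 C →+ Γ :=
  have hφ_zero : φ 0 = 0 := left_eq_add.mp (hφ _ _ (isSES_iso_zero (Iso.refl (0 : C))))
  QuotientAddGroup.lift (K0Rels C)
    (FreeAbelianGroup.lift (Quotient.lift φ fun _ _ ⟨e⟩ => by
      rw [hφ _ _ (isSES_iso_zero e), hφ_zero, add_zero]))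
    ((AddSubgroup.closure_le _).2 <| by
      rintro _ ⟨S, hS, rfl⟩
      simp [isoCl, hφ S.f S.g ⟨S.zero, hS⟩])

theorem K0.lift_mk {Γ : Type*} [AddCommGroup Γ] (φ : C → Γ)
    (hφ : ∀ ⦃A B D : C⦄ (f : A ⟶ B) (g : B ⟶ D), IsSES C f g → φ B = φ A + φ D) (A : C) :
    K0.lift φ hφ (K0.mk C A) = φ A :=
  FreeAbelianGroup.lift_apply_of _ _

theorem K0.mem_closure_range_mk (x : K0 C) :
    x ∈ AddSubgroup.closure (Set.range (K0.mk C)) := by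
  obtain ⟨y, rfl⟩ := QuotientAddGroup.mk_surjective x
  induction y using FreeAbelianGroup.induction_on with
  | zero => exact zero_mem _
  | of A =>
    obtain ⟨A, rfl⟩ := Quotient.exists_rep A
    exact AddSubgroup.subset_closure ⟨A, rfl⟩
  | neg y hy => exact neg_mem hy
  | add y z hy hz => exact add_mem hy hz

noncomputable def biprodInterchange (A B D E : C) :
    (A ⊞ B) ⊞ (D ⊞ E) ≅ (A ⊞ D) ⊞ (B ⊞ E) :=
  biprod.associator A B (D ⊞ E) ≪≫
    biprod.mapIso (Iso.refl A) ((biprod.associator B D E).symm ≪≫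
      biprod.mapIso (biprod.braiding B D) (Iso.refl E) ≪≫ biprod.associator D B E) ≪≫
    (biprod.associator A D (B ⊞ E)).symm

-- `[P] = [X]` in `K₀` forces this relation (`stablyEquiv_of_mk_eq`), and conversely.
def StablyEquiv (P X : C) : Prop :=
  ∃ (U W V₁ V₂ : C) (f₁ : U ⟶ V₁) (g₁ : V₁ ⟶ W) (f₂ : U ⟶ V₂) (g₂ : V₂ ⟶ W),
    IsSES C f₁ g₁ ∧ IsSES C f₂ g₂ ∧ Nonempty ((P ⊞ V₂) ≅ (X ⊞ V₁))

namespace StablyEquiv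

theorem of_iso {P X : C} (e : P ≅ X) : StablyEquiv P X :=
  ⟨0, 0, 0, 0, 𝟙 0, 0, 𝟙 0, 0, isSES_iso_zero (Iso.refl 0), isSES_iso_zero (Iso.refl 0),
    ⟨biprod.mapIso e (Iso.refl 0)⟩⟩

theorem symm {P X : C} (h : StablyEquiv P X) : StablyEquiv X P := by
  obtain ⟨U, W, V₁, V₂, f₁, g₁, f₂, g₂, h₁, h₂, ⟨i⟩⟩ := h
  exact ⟨U, W, V₂, V₁, f₂, g₂, f₁, g₁, h₂, h₁, ⟨i.symm⟩⟩

theorem congr {P X P' X' : C} (h : StablyEquiv P X) (eP : P ≅ P') (eX : X ≅ X') :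
    StablyEquiv P' X' := by
  obtain ⟨U, W, V₁, V₂, f₁, g₁, f₂, g₂, h₁, h₂, ⟨i⟩⟩ := h
  exact ⟨U, W, V₁, V₂, f₁, g₁, f₂, g₂, h₁, h₂,
    ⟨biprod.mapIso eP.symm (Iso.refl _) ≪≫ i ≪≫ biprod.mapIso eX (Iso.refl _)⟩⟩

theorem biprod {P X P' X' : C} (h : StablyEquiv P X) (h' : StablyEquiv P' X') :
    StablyEquiv (P ⊞ P') (X ⊞ X') := by
  obtain ⟨U, W, V₁, V₂, f₁, g₁, f₂, g₂, h₁, h₂, ⟨i⟩⟩ := h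
  obtain ⟨U', W', V₁', V₂', f₁', g₁', f₂', g₂', h₁', h₂', ⟨i'⟩⟩ := h'
  exact ⟨U ⊞ U', W ⊞ W', V₁ ⊞ V₁', V₂ ⊞ V₂', biprod.map f₁ f₁', biprod.map g₁ g₁',
    biprod.map f₂ f₂', biprod.map g₂ g₂', h₁.biprod_map h₁', h₂.biprod_map h₂',
    ⟨biprodInterchange P P' V₂ V₂' ≪≫ biprod.mapIso i i' ≪≫ biprodInterchange X V₁ X' V₁'⟩⟩

theorem cancel_right {P X R : C} (h : StablyEquiv (P ⊞ R) (X ⊞ R)) : StablyEquiv P X := by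
  obtain ⟨U, W, V₁, V₂, f₁, g₁, f₂, g₂, h₁, h₂, ⟨i⟩⟩ := h
  have hR := isSES_iso_zero (Iso.refl R)
  refine ⟨U ⊞ R, W ⊞ (0 : C), V₁ ⊞ R, V₂ ⊞ R, biprod.map f₁ (𝟙 R), biprod.map g₁ 0,
    biprod.map f₂ (𝟙 R), biprod.map g₂ 0, h₁.biprod_map hR, h₂.biprod_map hR, ⟨?_⟩⟩
  calc P ⊞ (V₂ ⊞ R) ≅ P ⊞ (R ⊞ V₂) := biprod.mapIso (Iso.refl P) (biprod.braiding V₂ R)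
    _ ≅ (P ⊞ R) ⊞ V₂ := (biprod.associator P R V₂).symm
    _ ≅ (X ⊞ R) ⊞ V₁ := i
    _ ≅ X ⊞ (R ⊞ V₁) := biprod.associator X R V₁
    _ ≅ X ⊞ (V₁ ⊞ R) := biprod.mapIso (Iso.refl X) (biprod.braiding R V₁)

theorem trans {A B E : C} (h : StablyEquiv A B) (h' : StablyEquiv B E) : StablyEquiv A E :=
  ((h.biprod h').congr (Iso.refl _) (biprod.braiding B E)).cancel_right

theorem of_isSES {A B D : C} {f : A ⟶ B} {g : B ⟶ D} (h : IsSES C f g) :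
    StablyEquiv (A ⊞ D) B :=
  ⟨A, D, A ⊞ D, B, biprod.inl, biprod.snd, f, g, isSES_inl_snd A D, h,
    ⟨biprod.braiding (A ⊞ D) B⟩⟩

end StablyEquiv

variable (C) in
def stablySetoid : Setoid C where
  r := StablyEquiv
  iseqv := ⟨fun _ => .of_iso (Iso.refl _), .symm, .trans⟩

variable (C) in
def StableClass : Type u := Quotient (stablySetoid C)

namespace StableClass

def mk (A : C) : StableClass C := Quotient.mk (stablySetoid C) A

theorem mk_eq_mk_iff {A B : C} : mk A = mk B ↔ StablyEquiv A B := Quotient.eq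

theorem mk_eq_mk_of_iso {A B : C} (e : A ≅ B) : mk A = mk B :=
  mk_eq_mk_iff.2 (.of_iso e)

noncomputable instance : Zero (StableClass C) := ⟨mk 0⟩

noncomputable instance : Add (StableClass C) :=
  ⟨Quotient.map₂ (· ⊞ ·) fun _ _ h _ _ h' => StablyEquiv.biprod h h'⟩

theorem mk_add_mk (A B : C) : mk A + mk B = mk (A ⊞ B) := rfl

noncomputable instance : AddCommMonoid (StableClass C) where
  add_assoc a b d := Quotient.inductionOn₃ a b d fun A B D =>
    mk_eq_mk_of_iso (biprod.associator A B D)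
  zero_add a := Quotient.inductionOn a fun A =>
    mk_eq_mk_of_iso (isoZeroBiprod (isZero_zero C)).symm
  add_zero a := Quotient.inductionOn a fun A =>
    mk_eq_mk_of_iso (isoBiprodZero (isZero_zero C)).symm
  add_comm a b := Quotient.inductionOn₂ a b fun A B => mk_eq_mk_of_iso (biprod.braiding A B)
  nsmul := nsmulRec

instance : IsCancelAdd (StableClass C) :=
  haveI : IsRightCancelAdd (StableClass C) := ⟨fun a r x => Quotient.inductionOn₃ a r x
    fun _ _ _ h => mk_eq_mk_iff.2 (mk_eq_mk_iff.1 h).cancel_right⟩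
  AddCommMagma.IsRightCancelAdd.toIsCancelAdd _

end StableClass

theorem stablyEquiv_of_mk_eq {P X : C} (h : K0.mk C P = K0.mk C X) : StablyEquiv P X := by
  let φ (A : C) : Algebra.GrothendieckAddGroup (StableClass C) :=
    Algebra.GrothendieckAddGroup.of (StableClass.mk A)
  have hφ : ∀ ⦃A B D : C⦄ (f : A ⟶ B) (g : B ⟶ D), IsSES C f g → φ B = φ A + φ D :=
    fun A B D f g hfg => by
      rw [← map_add, StableClass.mk_add_mk, StableClass.mk_eq_mk_iff.2 (.of_isSES hfg)]
  have hPX : φ P = φ X := by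
    rw [← K0.lift_mk φ hφ, ← K0.lift_mk φ hφ, h]
  exact StableClass.mk_eq_mk_iff.1 (Algebra.GrothendieckAddGroup.of_injective hPX)

section Subcategory

variable {S : Set C}

theorem AdditiveSub.exists_eq_mk_sub_mk_of_mem_closure (hS : AdditiveSub C S) {x : K0 C}
    (hx : x ∈ AddSubgroup.closure (K0.mk C '' S)) :
    ∃ A ∈ S, ∃ B ∈ S, x = K0.mk C A - K0.mk C B := by
  let T : AddSubgroup (K0 C) :=
    { carrier := {x | ∃ A ∈ S, ∃ B ∈ S, x = K0.mk C A - K0.mk C B}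
      zero_mem' := ⟨0, hS.1, 0, hS.1, (sub_self _).symm⟩
      add_mem' := by
        rintro _ _ ⟨A, hA, B, hB, rfl⟩ ⟨A', hA', B', hB', rfl⟩
        refine ⟨A ⊞ A', hS.2 _ _ hA hA', B ⊞ B', hS.2 _ _ hB hB', ?_⟩
        rw [K0.mk_biprod, K0.mk_biprod]
        abel
      neg_mem' := by
        rintro _ ⟨A, hA, B, hB, rfl⟩
        exact ⟨B, hB, A, hA, neg_sub _ _⟩ }
  refine (AddSubgroup.closure_le T).2 ?_ hx
  rintro _ ⟨A, hA, rfl⟩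
  exact ⟨A, hA, 0, hS.1, by rw [K0.mk_zero, sub_zero]⟩

theorem K0.exists_eq_mk_sub_mk (x : K0 C) : ∃ A B : C, x = K0.mk C A - K0.mk C B := by
  have hx := K0.mem_closure_range_mk x
  rw [← Set.image_univ] at hx
  have huniv : AdditiveSub C (Set.univ : Set C) :=
    ⟨Set.mem_univ _, fun _ _ _ _ => Set.mem_univ _⟩
  obtain ⟨A, -, B, -, hAB⟩ := huniv.exists_eq_mk_sub_mk_of_mem_closure hx
  exact ⟨A, B, hAB⟩

namespace CompleteSub

variable (hS : CompleteSub C S)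
include hS

theorem zero_mem {X : C} (hX : X ∈ S) : (0 : C) ∈ S :=
  (hS _ _ (isSES_zero_iso (Iso.refl X))).2.2 hX hX

theorem mem_of_iso {A B : C} (e : A ≅ B) (hA : A ∈ S) : B ∈ S :=
  (hS _ _ (isSES_zero_iso e)).1 (hS.zero_mem hA) hA

theorem biprod_mem {A B : C} (hA : A ∈ S) (hB : B ∈ S) : (A ⊞ B) ∈ S :=
  (hS _ _ (isSES_inl_snd A B)).2.1 hA hB

theorem mem_of_biprod_mem {A B : C} (hAB : (A ⊞ B) ∈ S) (hB : B ∈ S) : A ∈ S :=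
  (hS _ _ (isSES_inl_snd A B)).2.2 hAB hB

theorem additiveSub {X : C} (hX : X ∈ S) : AdditiveSub C S :=
  ⟨hS.zero_mem hX, fun _ _ => hS.biprod_mem⟩

variable (hD : DenseSub C S)
include hD

theorem exists_forall_isSES_biprod_mem (U W : C) :
    ∃ Y : C, ∀ (V : C) (f : U ⟶ V) (g : V ⟶ W), IsSES C f g → (V ⊞ Y) ∈ S := by
  obtain ⟨TU, hTU, U', ⟨eU⟩⟩ := hD U
  obtain ⟨TW, hTW, W', ⟨eW⟩⟩ := hD W
  refine ⟨U' ⊞ W', fun V f g hfg => ?_⟩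
  have hext := (hfg.biprod_map (isSES_iso_zero (Iso.refl U'))).biprod_map
    (isSES_zero_iso (Iso.refl W'))
  have hext' := hext.of_iso ((isoBiprodZero (isZero_zero C)).symm ≪≫ eU.symm)
    (biprod.associator V U' W')
    (biprod.mapIso (isoBiprodZero (isZero_zero C)).symm (Iso.refl W') ≪≫ eW.symm)
  exact (hS _ _ hext').2.1 hTU hTW

theorem mem_of_stablyEquiv {P X : C} (hX : X ∈ S) (h : StablyEquiv P X) : P ∈ S := by
  obtain ⟨U, W, V₁, V₂, f₁, g₁, f₂, g₂, h₁, h₂, ⟨i⟩⟩ := h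
  obtain ⟨Y, hY⟩ := hS.exists_forall_isSES_biprod_mem hD U W
  have e : X ⊞ (V₁ ⊞ Y) ≅ P ⊞ (V₂ ⊞ Y) :=
    (biprod.associator X V₁ Y).symm ≪≫ biprod.mapIso i.symm (Iso.refl Y) ≪≫
      biprod.associator P V₂ Y
  exact hS.mem_of_biprod_mem
    (hS.mem_of_iso e (hS.biprod_mem hX (hY V₁ f₁ g₁ h₁))) (hY V₂ f₂ g₂ h₂)

end CompleteSub

theorem setOf_mk_mem_closure_image (hD : DenseSub C S) (hC : CompleteSub C S) :
    {A : C | K0.mk C A ∈ AddSubgroup.closure (K0.mk C '' S)} = S := by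
  obtain ⟨X₀, hX₀, -⟩ := hD 0
  refine Set.ext fun A => ⟨fun hA => ?_, fun hA => AddSubgroup.subset_closure ⟨A, hA, rfl⟩⟩
  obtain ⟨X, hX, Y, hY, hAXY⟩ := (hC.additiveSub hX₀).exists_eq_mk_sub_mk_of_mem_closure hA
  have hAY : K0.mk C (A ⊞ Y) = K0.mk C X := by
    rw [K0.mk_biprod, hAXY, sub_add_cancel]
  exact hC.mem_of_biprod_mem (hC.mem_of_stablyEquiv hD hX (stablyEquiv_of_mk_eq hAY)) hY

end Subcategory

section Subgroup

variable (H : AddSubgroup (K0 C))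

theorem completeSub_setOf_mk_mem : CompleteSub C {A : C | K0.mk C A ∈ H} := by
  intro A B D f g hfg
  simp only [Set.mem_ofPred_eq, K0.mk_eq_add_of_isSES hfg]
  exact ⟨fun hA hAD => by simpa using sub_mem hAD hA, add_mem,
    fun hAD hD => by simpa using sub_mem hAD hD⟩

variable {G : Set C} (hG : IsCogenerator C G) (hGH : G ⊆ {A : C | K0.mk C A ∈ H})
include hG hGH

theorem denseSub_setOf_mk_mem : DenseSub C {A : C | K0.mk C A ∈ H} := by
  intro A
  obtain ⟨Gb, A', f, g, hGb, hfg⟩ := hG.2 A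
  refine ⟨A ⊞ A', ?_, A', ⟨Iso.refl _⟩⟩
  show K0.mk C (A ⊞ A') ∈ H
  rw [K0.mk_biprod, ← K0.mk_eq_add_of_isSES hfg]
  exact hGH hGb

theorem closure_image_setOf_mk_mem :
    AddSubgroup.closure (K0.mk C '' {A : C | K0.mk C A ∈ H}) = H := by
  refine le_antisymm ((AddSubgroup.closure_le H).2 (Set.image_subset_iff.2 subset_rfl))
    fun x hx => ?_
  obtain ⟨A, B, rfl⟩ := K0.exists_eq_mk_sub_mk x
  obtain ⟨Gb, B', f, g, hGb, hfg⟩ := hG.2 B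
  have hAB' : K0.mk C (A ⊞ B') = K0.mk C A - K0.mk C B + K0.mk C Gb := by
    rw [K0.mk_biprod, K0.mk_eq_add_of_isSES hfg]
    abel
  have hmem : K0.mk C (A ⊞ B') ∈ H := by
    rw [hAB']
    exact add_mem hx (hGH hGb)
  rw [eq_sub_of_add_eq hAB'.symm]
  exact sub_mem (AddSubgroup.subset_closure ⟨_, hmem, rfl⟩)
    (AddSubgroup.subset_closure ⟨_, hGH hGb, rfl⟩)

end Subgroup

end AbK0

theorem classification_cogenerator_general
    (C : Type u) [Category.{v} C] [Abelian C]
    (G : Set C) (hG : IsCogenerator C G) :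
    (∀ H : AddSubgroup (K0 C), AddSubgroup.closure (K0.mk C '' G) ≤ H →
      (G ⊆ {A : C | K0.mk C A ∈ H} ∧
       DenseSub C {A : C | K0.mk C A ∈ H} ∧ CompleteSub C {A : C | K0.mk C A ∈ H} ∧
       AddSubgroup.closure (K0.mk C '' {A : C | K0.mk C A ∈ H}) = H)) ∧
    (∀ S : Set C, DenseSub C S → CompleteSub C S → G ⊆ S →
      (AddSubgroup.closure (K0.mk C '' G) ≤ AddSubgroup.closure (K0.mk C '' S) ∧
       {A : C | K0.mk C A ∈ AddSubgroup.closure (K0.mk C '' S)} = S)) := by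
  refine ⟨fun H hGH => ?_, fun S hD hC hGS => ?_⟩
  · have hGH' : G ⊆ {A : C | K0.mk C A ∈ H} :=
      Set.image_subset_iff.1 ((AddSubgroup.closure_le H).1 hGH)
    exact ⟨hGH', denseSub_setOf_mk_mem H hG hGH', completeSub_setOf_mk_mem H,
      closure_image_setOf_mk_mem H hG hGH'⟩
  · exact ⟨AddSubgroup.closure_mono (Set.image_mono hGS), setOf_mk_mem_closure_image hD hC⟩

/-- Matsui's classification (cogenerator case): `H ↦ f(H) = {A | [A] ∈ H}` and
`S ↦ g(S) = ⟨[A] : A ∈ S⟩` are mutually inverse bijections between subgroups of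
`K₀(C)` containing `H_𝒢` and dense complete full subcategories of `C` containing `𝒢`. -/
theorem classification_cogenerator
    (C : Type u) [Category.{v} C] [Abelian C] [EssentiallySmall.{w} C]
    (G : Set C) (hG : IsCogenerator C G) :
    (∀ H : AddSubgroup (K0 C), AddSubgroup.closure (K0.mk C '' G) ≤ H →
      (G ⊆ {A : C | K0.mk C A ∈ H} ∧
       DenseSub C {A : C | K0.mk C A ∈ H} ∧ CompleteSub C {A : C | K0.mk C A ∈ H} ∧
       AddSubgroup.closure (K0.mk C '' {A : C | K0.mk C A ∈ H}) = H)) ∧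
    (∀ S : Set C, DenseSub C S → CompleteSub C S → G ⊆ S →
      (AddSubgroup.closure (K0.mk C '' G) ≤ AddSubgroup.closure (K0.mk C '' S) ∧
       {A : C | K0.mk C A ∈ AddSubgroup.closure (K0.mk C '' S)} = S)) :=
  classification_cogenerator_general C G hG
end

section
/- Let C be an essentially small abelian category and S a dense complete full subcategory of C. An object A of C belongs to S if and only if there exist objects S_A and S_0 in S such that A ⊕ S_A ≅ S_0. -/
/-!
Grothendieck groups of essentially small abelian categories.

`K0 C` is the quotient of the free abelian group on the isomorphism classes of objects
of `C` by the subgroup generated by the Euler relations `⟨A⟩ - ⟨B⟩ + ⟨C⟩` coming from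
short exact sequences `0 ⟶ A ⟶ B ⟶ C ⟶ 0`; `K0.mk C A` is the class `[A]`.
A full subcategory (identified with its set of objects) is *dense* if every object of `C`
is a direct summand of an object of the subcategory, and *complete* if whenever two of
the three objects of a short exact sequence lie in it, so does the third.
A *generator* (resp. *cogenerator*) is a full additive subcategory `𝒢` such that every
object `A` fits in a short exact sequence `0 ⟶ A' ⟶ G ⟶ A ⟶ 0`
(resp. `0 ⟶ A ⟶ G ⟶ A' ⟶ 0`) with `G ∈ 𝒢`.
-/

open CategoryTheory CategoryTheory.Limits ZeroObject

universe w v u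

open AbK0

lemma isSES_of_biprod_iso (C : Type u) [Category.{v} C] [Abelian C]
    (A B S0 : C) (e : A ⊞ B ≅ S0) :
    IsSES C (biprod.inl ≫ e.hom) (e.inv ≫ biprod.snd) := by
  refine ⟨by simp, ?_⟩
  exact ShortComplex.shortExact_of_iso
    (S₁ := ShortComplex.mk (biprod.inl : A ⟶ _) (biprod.snd : _ ⟶ B) (by simp))
    (ShortComplex.isoMk (Iso.refl _) e (Iso.refl _) (by simp) (by simp))
    (ShortComplex.Splitting.ofHasBinaryBiproduct A B).shortExact

/-- For a dense complete full subcategory `S` of an abelian category, an object `A` lies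
in `S` if and only if `A ⊕ S_A ≅ S_0` for some objects `S_A, S_0 ∈ S`. -/
theorem mem_iff_biprod_iso_abelian
    (C : Type u) [Category.{v} C] [Abelian C] [EssentiallySmall.{w} C]
    (S : Set C) (hdense : DenseSub C S) (hcomplete : CompleteSub C S) (A : C) :
    A ∈ S ↔ ∃ SA ∈ S, ∃ S0 ∈ S, Nonempty ((A ⊞ SA) ≅ S0) := by
  constructor
  · intro hA
    obtain ⟨X, hX, A', ⟨e⟩⟩ := hdense A
    have hses := isSES_of_biprod_iso C A A' X e.symm
    have hA' : A' ∈ S := (hcomplete _ _ hses).1 hA hX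
    exact ⟨A', hA', X, hX, ⟨e.symm⟩⟩
  · rintro ⟨SA, hSA, S0, hS0, ⟨e⟩⟩
    have hses := isSES_of_biprod_iso C A SA S0 e
    exact (hcomplete _ _ hses).2.2 hS0 hSA
end
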